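/- arXiv:1806.01073 — 4 statements merged into one kernel-verified Lean document; each statement's English description precedes it below -/
import Mathlib

section
/- Let p ∈ M_n(ℂ) be positive semidefinite and define the linear map M_p : M_n(ℂ) → M_n(ℂ) by M_p(h) = ∫₀¹ p^α h p^{1−α} dα. Then ‖M_p(h)‖_F ≤ ‖p‖_op · ‖h‖_F for every h ∈ M_n(ℂ), and the operator norm of M_p with respect to the Frobenius norm equals ‖p‖_op. -/
open Matrix MeasureTheory
open scoped ComplexOrder

attribute [local instance] Matrix.frobeniusNormedAddCommGroup Matrix.frobeniusNormedSpace

/-- Functional calculus for a matrix: apply `f : ℝ → ℝ` to a Hermitian matrix `A` via its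
spectral decomposition (junk value `0` if `A` is not Hermitian). -/
noncomputable def hcfc {n : ℕ} (f : ℝ → ℝ) (A : Matrix (Fin n) (Fin n) ℂ) :
    Matrix (Fin n) (Fin n) ℂ :=
  if hA : A.IsHermitian then
    (hA.eigenvectorUnitary : Matrix (Fin n) (Fin n) ℂ) *
      Matrix.diagonal (fun i => (f (hA.eigenvalues i) : ℂ)) *
      star (hA.eigenvectorUnitary : Matrix (Fin n) (Fin n) ℂ)
  else 0

/-- The power `p^α` of a positive semidefinite matrix via functional calculus
(with `p⁰ = 1`, since `x ^ (0:ℝ) = 1` for `Real.rpow`). -/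
noncomputable def psdPow {n : ℕ} (p : Matrix (Fin n) (Fin n) ℂ) (α : ℝ) :
    Matrix (Fin n) (Fin n) ℂ :=
  hcfc (fun x => x ^ α) p

/-- The multiplication operator `M_p(h) = ∫₀¹ p^α h p^{1−α} dα` (Bochner integral). -/
noncomputable def Mop {n : ℕ} (p h : Matrix (Fin n) (Fin n) ℂ) : Matrix (Fin n) (Fin n) ℂ :=
  ∫ α in Set.Icc (0:ℝ) 1, psdPow p α * h * psdPow p (1 - α)

/-- The Frobenius (Hilbert–Schmidt) norm `‖h‖_F = √(tr(h†h))`. -/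
noncomputable def frobNorm {n : ℕ} (h : Matrix (Fin n) (Fin n) ℂ) : ℝ :=
  Real.sqrt ((Matrix.trace (hᴴ * h)).re)

/-- The operator norm of a matrix, acting on the Euclidean space `ℂⁿ`. -/
noncomputable def opNorm {n : ℕ} (h : Matrix (Fin n) (Fin n) ℂ) : ℝ :=
  ‖Matrix.toEuclideanCLM (𝕜 := ℂ) h‖


/-! Diagonalise `p = U diag(λ) U*`. Conjugation by `U` turns `M_p` into the Schur multiplier by
the matrix `L(λ_a, λ_b)`, where `L(x, y) = ∫₀¹ x^α y^(1-α) dα`, and it preserves the Frobenius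
norm. Weighted AM–GM gives `0 ≤ L(x, y) ≤ max x y`, while `‖p‖_op = max λ_i`, so every entry of the
multiplier is at most `‖p‖_op`. Conversely `L(x, x) = x`, so on `U E_ii U*` the map `M_p` is
multiplication by `λ_i`, and no constant below `max λ_i = ‖p‖_op` works. -/

section LogMean

open Real

lemma rpow_mul_rpow_one_sub_le_max {x y α : ℝ} (hx : 0 ≤ x) (hy : 0 ≤ y)
    (hα : α ∈ Set.Icc (0:ℝ) 1) : x ^ α * y ^ (1 - α) ≤ max x y := by
  obtain ⟨hα0, hα1⟩ := hα
  calc x ^ α * y ^ (1 - α) ≤ α * x + (1 - α) * y :=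
        geom_mean_le_arith_mean2_weighted hα0 (by linarith) hx hy (by ring)
    _ ≤ α * max x y + (1 - α) * max x y := by
        gcongr
        exacts [le_max_left x y, le_max_right x y]
    _ = max x y := by ring

lemma integrableOn_rpow_mul_rpow_one_sub {x y : ℝ} (hx : 0 ≤ x) (hy : 0 ≤ y) :
    IntegrableOn (fun α : ℝ => x ^ α * y ^ (1 - α)) (Set.Icc 0 1) := by
  have hmeas : Measurable fun α : ℝ => x ^ α * y ^ (1 - α) := by fun_prop
  refine IntegrableOn.of_bound measure_Icc_lt_top hmeas.aestronglyMeasurable (max x y) ?_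
  rw [ae_restrict_iff' measurableSet_Icc]
  refine Filter.Eventually.of_forall fun α hα => ?_
  rw [norm_of_nonneg (by positivity)]
  exact rpow_mul_rpow_one_sub_le_max hx hy hα

/-- For distinct positive `x` and `y` this is the logarithmic mean `(x - y) / (log x - log y)`. -/
noncomputable def logMean (x y : ℝ) : ℝ := ∫ α in Set.Icc (0:ℝ) 1, x ^ α * y ^ (1 - α)

lemma logMean_nonneg {x y : ℝ} (hx : 0 ≤ x) (hy : 0 ≤ y) : 0 ≤ logMean x y :=
  setIntegral_nonneg measurableSet_Icc fun _ _ => by positivity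

lemma logMean_le_max {x y : ℝ} (hx : 0 ≤ x) (hy : 0 ≤ y) : logMean x y ≤ max x y :=
  calc logMean x y ≤ ∫ _ in Set.Icc (0:ℝ) 1, max x y :=
        setIntegral_mono_on (integrableOn_rpow_mul_rpow_one_sub hx hy)
          (integrableOn_const measure_Icc_lt_top.ne) measurableSet_Icc
          fun _ hα => rpow_mul_rpow_one_sub_le_max hx hy hα
    _ = max x y := by simp

lemma logMean_self {x : ℝ} (hx : 0 ≤ x) : logMean x x = x :=
  calc logMean x x = ∫ _ in Set.Icc (0:ℝ) 1, x :=
        setIntegral_congr_fun measurableSet_Icc fun α _ => by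
          rw [← rpow_add' hx (by norm_num), add_sub_cancel, rpow_one]
    _ = x := by simp

end LogMean

section Hadamard

variable {l m n o α : Type*} [DecidableEq m] [DecidableEq n] [CommSemiring α]

lemma diagonal_mul_mul_diagonal [Fintype m] [Fintype n] (d : m → α) (e : n → α) (K : Matrix m n α) :
    diagonal d * K * diagonal e = vecMulVec d e ⊙ K := by
  ext a b
  simp only [mul_diagonal, diagonal_mul, hadamard_apply, vecMulVec_apply]
  ring

lemma hadamard_single (A : Matrix m n α) (i : m) (j : n) (z : α) :
    A ⊙ single i j z = single i j (A i j * z) := by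
  ext a b
  rw [hadamard_apply, single_apply, single_apply]
  split_ifs with h
  · rw [h.1, h.2]
  · exact mul_zero _

lemma mul_hadamard_mul_eq_sum [Fintype l] [Fintype m] [Fintype n] [Fintype o]
    (U : Matrix l m α) (A K : Matrix m n α) (V : Matrix n o α) :
    U * (A ⊙ K) * V = ∑ a, ∑ b, A a b • (U * single a b (K a b) * V) := by
  conv_lhs => rw [matrix_eq_sum_single (A ⊙ K)]
  simp only [Matrix.mul_sum, Matrix.sum_mul]
  refine Finset.sum_congr rfl fun a _ => Finset.sum_congr rfl fun b _ => ?_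
  rw [hadamard_apply, ← smul_eq_mul (A a b), ← smul_single, Matrix.mul_smul, Matrix.smul_mul]

end Hadamard

lemma integral_sum_sum_ofReal_smul {X ι κ E : Type*} [MeasurableSpace X] [Fintype ι] [Fintype κ]
    [NormedAddCommGroup E] [NormedSpace ℂ E] [CompleteSpace E] {μ : Measure X}
    {f : ι → κ → X → ℝ} (hf : ∀ i j, Integrable (f i j) μ) (C : ι → κ → E) :
    ∫ x, ∑ i, ∑ j, (f i j x : ℂ) • C i j ∂μ = ∑ i, ∑ j, ((∫ x, f i j x ∂μ : ℝ) : ℂ) • C i j := by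
  have hint : ∀ i j, Integrable (fun x => (f i j x : ℂ) • C i j) μ :=
    fun i j => (hf i j).ofReal.smul_const _
  rw [integral_finsetSum _ fun i _ => integrable_finsetSum _ fun j _ => hint i j]
  refine Finset.sum_congr rfl fun i _ => ?_
  rw [integral_finsetSum _ fun j _ => hint i j]
  refine Finset.sum_congr rfl fun j _ => ?_
  rw [integral_smul_const, integral_complex_ofReal]

lemma frobNorm_eq_sqrt_sum {n : ℕ} (M : Matrix (Fin n) (Fin n) ℂ) :
    frobNorm M = √(∑ i, ∑ j, ‖M i j‖ ^ 2) := by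
  rw [frobNorm, trace, Finset.sum_comm]
  simp only [diag, mul_apply, conjTranspose_apply, Complex.re_sum, ← Complex.normSq_eq_norm_sq,
    Complex.normSq_apply, Complex.mul_re, Complex.star_def, Complex.conj_re, Complex.conj_im]
  congr 1
  exact Finset.sum_congr rfl fun i _ => Finset.sum_congr rfl fun j _ => by ring

lemma frobNorm_unitary_conj {n : ℕ} {U : Matrix (Fin n) (Fin n) ℂ}
    (hU : U ∈ unitaryGroup (Fin n) ℂ) (M : Matrix (Fin n) (Fin n) ℂ) :
    frobNorm (U * M * star U) = frobNorm M := by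
  have hU' : star U * U = 1 := mem_unitaryGroup_iff'.mp hU
  have hconj : (U * M * star U)ᴴ * (U * M * star U) = U * (Mᴴ * M) * star U := by
    simp only [← star_eq_conjTranspose, star_mul, star_star, mul_assoc]
    rw [← mul_assoc (star U), hU', one_mul]
  rw [frobNorm, frobNorm, hconj, trace_mul_cycle, hU', one_mul]

lemma frobNorm_single {n : ℕ} (i j : Fin n) (z : ℂ) : frobNorm (single i j z) = ‖z‖ := by
  rw [frobNorm_eq_sqrt_sum]
  simp [single_apply, apply_ite (fun x : ℂ => ‖x‖ ^ 2), ite_and, Finset.sum_ite_irrel]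

lemma frobNorm_hadamard_le {n : ℕ} {A : Matrix (Fin n) (Fin n) ℂ} {c : ℝ} (hc : 0 ≤ c)
    (hA : ∀ i j, ‖A i j‖ ≤ c) (K : Matrix (Fin n) (Fin n) ℂ) :
    frobNorm (A ⊙ K) ≤ c * frobNorm K := by
  simp only [frobNorm_eq_sqrt_sum, hadamard_apply, norm_mul]
  rw [← Real.sqrt_sq hc, ← Real.sqrt_mul (sq_nonneg c), Finset.mul_sum]
  gcongr with i _ j _
  rw [Finset.mul_sum]
  gcongr with j
  rw [mul_pow]
  gcongr
  exact hA i j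

open scoped Matrix.Norms.L2Operator in
lemma opNorm_eq_norm_eigenvalues {n : ℕ} {A : Matrix (Fin n) (Fin n) ℂ} (hA : A.IsHermitian) :
    opNorm A = ‖hA.eigenvalues‖ := by
  rw [opNorm, ← Matrix.cstar_norm_def]
  conv_lhs => rw [hA.spectral_theorem]
  rw [Unitary.conjStarAlgAut_apply, ← Unitary.coe_star, CStarRing.norm_mul_coe_unitary,
    CStarRing.norm_coe_unitary_mul, l2_opNorm_diagonal]
  simp [Pi.norm_def]

lemma opNorm_le_iff {n : ℕ} {A : Matrix (Fin n) (Fin n) ℂ} (hA : A.IsHermitian) {c : ℝ}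
    (hc : 0 ≤ c) : opNorm A ≤ c ↔ ∀ i, |hA.eigenvalues i| ≤ c := by
  simp only [opNorm_eq_norm_eigenvalues hA, pi_norm_le_iff_of_nonneg hc, Real.norm_eq_abs]

lemma psdPow_eq {n : ℕ} {p : Matrix (Fin n) (Fin n) ℂ} (hp : p.IsHermitian) (α : ℝ) :
    psdPow p α = (hp.eigenvectorUnitary : Matrix (Fin n) (Fin n) ℂ) *
      diagonal (fun i => ((hp.eigenvalues i ^ α : ℝ) : ℂ)) *
      star (hp.eigenvectorUnitary : Matrix (Fin n) (Fin n) ℂ) :=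
  dif_pos hp

noncomputable def logMeanMatrix {n : ℕ} (d : Fin n → ℝ) : Matrix (Fin n) (Fin n) ℂ :=
  of fun a b => (logMean (d a) (d b) : ℂ)

lemma norm_logMeanMatrix_apply_le {n : ℕ} {d : Fin n → ℝ} {c : ℝ} (hd : ∀ i, 0 ≤ d i)
    (hdc : ∀ i, d i ≤ c) (a b : Fin n) : ‖logMeanMatrix d a b‖ ≤ c := by
  rw [logMeanMatrix, of_apply, Complex.norm_real,
    Real.norm_of_nonneg (logMean_nonneg (hd a) (hd b))]
  exact (logMean_le_max (hd a) (hd b)).trans (max_le (hdc a) (hdc b))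

lemma psdPow_mul_mul_psdPow {n : ℕ} {p : Matrix (Fin n) (Fin n) ℂ} (hp : p.IsHermitian)
    (h : Matrix (Fin n) (Fin n) ℂ) (α : ℝ) :
    psdPow p α * h * psdPow p (1 - α) =
      (hp.eigenvectorUnitary : Matrix (Fin n) (Fin n) ℂ) *
        (of (fun a b => ((hp.eigenvalues a ^ α * hp.eigenvalues b ^ (1 - α) : ℝ) : ℂ)) ⊙
          (star (hp.eigenvectorUnitary : Matrix (Fin n) (Fin n) ℂ) * h * hp.eigenvectorUnitary)) *
        star (hp.eigenvectorUnitary : Matrix (Fin n) (Fin n) ℂ) := by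
  set U : Matrix (Fin n) (Fin n) ℂ := ↑hp.eigenvectorUnitary
  have hassoc : ∀ D D' : Matrix (Fin n) (Fin n) ℂ,
      U * D * star U * h * (U * D' * star U) = U * (D * (star U * h * U) * D') * star U :=
    fun D D' => by simp only [mul_assoc]
  rw [psdPow_eq hp, psdPow_eq hp, hassoc, diagonal_mul_mul_diagonal]
  congr 3
  ext a b
  simp [vecMulVec_apply]

lemma Mop_eq_conj_hadamard {n : ℕ} {p : Matrix (Fin n) (Fin n) ℂ} (hp : p.PosSemidef)
    (h : Matrix (Fin n) (Fin n) ℂ) :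
    Mop p h = (hp.1.eigenvectorUnitary : Matrix (Fin n) (Fin n) ℂ) *
      (logMeanMatrix hp.1.eigenvalues ⊙
        (star (hp.1.eigenvectorUnitary : Matrix (Fin n) (Fin n) ℂ) * h * hp.1.eigenvectorUnitary)) *
      star (hp.1.eigenvectorUnitary : Matrix (Fin n) (Fin n) ℂ) := by
  simp only [Mop, psdPow_mul_mul_psdPow hp.1, mul_hadamard_mul_eq_sum, of_apply]
  exact integral_sum_sum_ofReal_smul (E := Matrix (Fin n) (Fin n) ℂ) (fun a b =>
    integrableOn_rpow_mul_rpow_one_sub (hp.eigenvalues_nonneg a) (hp.eigenvalues_nonneg b)) _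

lemma frobNorm_Mop_le {n : ℕ} {p : Matrix (Fin n) (Fin n) ℂ} (hp : p.PosSemidef)
    (h : Matrix (Fin n) (Fin n) ℂ) : frobNorm (Mop p h) ≤ opNorm p * frobNorm h := by
  set U : Matrix (Fin n) (Fin n) ℂ := ↑hp.1.eigenvectorUnitary
  have hU : U ∈ unitaryGroup (Fin n) ℂ := hp.1.eigenvectorUnitary.2
  have hle : ∀ i, hp.1.eigenvalues i ≤ opNorm p := fun i =>
    (le_abs_self _).trans <| (opNorm_le_iff hp.1 (norm_nonneg _)).1 le_rfl i
  calc frobNorm (Mop p h)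
      = frobNorm (logMeanMatrix hp.1.eigenvalues ⊙ (star U * h * U)) := by
        rw [Mop_eq_conj_hadamard hp, frobNorm_unitary_conj hU]
    _ ≤ opNorm p * frobNorm (star U * h * U) :=
        frobNorm_hadamard_le (norm_nonneg _)
          (norm_logMeanMatrix_apply_le hp.eigenvalues_nonneg hle) _
    _ = opNorm p * frobNorm h := by
        rw [← frobNorm_unitary_conj (Unitary.star_mem hU) h, star_star]

lemma eigenvalues_le_of_forall_frobNorm_Mop_le {n : ℕ} {p : Matrix (Fin n) (Fin n) ℂ}
    (hp : p.PosSemidef) {c : ℝ} (hc : ∀ h, frobNorm (Mop p h) ≤ c * frobNorm h) (i : Fin n) :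
    hp.1.eigenvalues i ≤ c := by
  set U : Matrix (Fin n) (Fin n) ℂ := ↑hp.1.eigenvectorUnitary
  have hU : U ∈ unitaryGroup (Fin n) ℂ := hp.1.eigenvectorUnitary.2
  have hU' : star U * U = 1 := mem_unitaryGroup_iff'.mp hU
  have hunconj : star U * (U * single i i 1 * star U) * U = single i i 1 := by
    rw [← mul_assoc, ← mul_assoc, hU', one_mul, mul_assoc, hU', mul_one]
  have hMop : Mop p (U * single i i 1 * star U) =
      U * single i i (hp.1.eigenvalues i : ℂ) * star U := by
    rw [Mop_eq_conj_hadamard hp, hunconj, hadamard_single, logMeanMatrix, of_apply,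
      logMean_self (hp.eigenvalues_nonneg i), mul_one]
  have := hc (U * single i i 1 * star U)
  rwa [hMop, frobNorm_unitary_conj hU, frobNorm_unitary_conj hU, frobNorm_single,
    frobNorm_single, Complex.norm_real, Real.norm_of_nonneg (hp.eigenvalues_nonneg i), norm_one,
    mul_one] at this

/-- For positive semidefinite `p`, the map `M_p(h) = ∫₀¹ p^α h p^{1−α} dα` satisfies
`‖M_p(h)‖_F ≤ ‖p‖_op ‖h‖_F`, and its operator norm with respect to the Frobenius norm
(i.e. the least constant `c ≥ 0` with `‖M_p(h)‖_F ≤ c ‖h‖_F` for all `h`) equals `‖p‖_op`. -/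
theorem Mop_norm_eq_opNorm {n : ℕ} (p : Matrix (Fin n) (Fin n) ℂ) (hp : p.PosSemidef) :
    (∀ h : Matrix (Fin n) (Fin n) ℂ, frobNorm (Mop p h) ≤ opNorm p * frobNorm h) ∧
      sInf {c : ℝ | 0 ≤ c ∧ ∀ h : Matrix (Fin n) (Fin n) ℂ,
        frobNorm (Mop p h) ≤ c * frobNorm h} = opNorm p := by
  refine ⟨frobNorm_Mop_le hp, IsLeast.csInf_eq ⟨⟨norm_nonneg _, frobNorm_Mop_le hp⟩, ?_⟩⟩
  rintro c ⟨hc, hMop⟩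
  refine (opNorm_le_iff hp.1 hc).2 fun i => ?_
  rw [abs_of_nonneg (hp.eigenvalues_nonneg i)]
  exact eigenvalues_le_of_forall_frobNorm_Mop_le hp hMop i
end

section
/- Let p ∈ M_n(ℂ) be positive semidefinite with tr p = 1. Then the supremum over all Hermitian x ∈ M_n(ℂ) of tr(x·p) − log tr(exp x) equals tr(p log p), where exp is the matrix exponential and tr(x·p) is real since x is Hermitian and p positive semidefinite. -/
/-!
Diagonalise `p = U diag(l) U*` and write a Hermitian `x` as `U q U*`. Then `tr(x p) = ∑ lᵢ qᵢᵢ`,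
and Peierls' inequality `∑ exp qᵢᵢ ≤ tr(exp q)` (Jensen for `exp`, the `i`-th row of the
eigenvector unitary of `q` giving the weights) bounds the functional at `x` by the classical
quantity `∑ lᵢ dᵢ - log ∑ exp dᵢ` at `d = (qᵢᵢ)`, which Gibbs' inequality bounds by `∑ lᵢ log lᵢ`.
Conversely, `x = U diag(d) U*` attains every classical value, and `dᵢ = log (lᵢ + ε)` comes within
`n ε` of `∑ lᵢ log lᵢ`; zero eigenvalues are why the supremum need not be attained.
-/

open Matrix
open scoped ComplexOrder

attribute [local instance] Matrix.frobeniusNormedRing Matrix.frobeniusNormedAlgebra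

/-- `tr(p log p)`: apply `λ ↦ λ log λ` (which takes the value `0` at `λ = 0`, since
`Real.log 0 = 0`) to `p` via the functional calculus and take the (real part of the) trace. -/
noncomputable def trEnt {n : ℕ} (p : Matrix (Fin n) (Fin n) ℂ) : ℝ :=
  (Matrix.trace (hcfc (fun l => l * Real.log l) p)).re

section Gibbs

open Real

variable {ι : Type*} [Fintype ι] {l : ι → ℝ}

theorem Real.mul_sub_log_le_exp_sub {x : ℝ} (hx : 0 ≤ x) (a : ℝ) :
    x * (a - log x) ≤ exp a - x := by
  rcases hx.eq_or_lt with rfl | hx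
  · simpa using (exp_pos a).le
  · have h := log_le_sub_one_of_pos (div_pos (exp_pos a) hx)
    rw [log_div (exp_pos a).ne' hx.ne', log_exp] at h
    calc x * (a - log x) ≤ x * (exp a / x - 1) := by gcongr
      _ = exp a - x := by field_simp

theorem sum_mul_sub_log_le_sum_mul_log (hl : ∀ i, 0 ≤ l i) (hsum : ∑ i, l i = 1) {d : ι → ℝ}
    {t : ℝ} (ht : ∑ i, exp (d i) ≤ t) :
    ∑ i, l i * d i - log t ≤ ∑ i, l i * log (l i) := by
  set T := ∑ i, exp (d i)
  have hT : 0 < T :=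
    Finset.sum_pos (fun i _ => exp_pos (d i))
      (Finset.nonempty_of_sum_ne_zero (f := l) (by simp [hsum]))
  have htermwise : ∑ i, l i * (d i - log T - log (l i)) ≤ ∑ i, (exp (d i) / T - l i) :=
    Finset.sum_le_sum fun i _ => by
      simpa [exp_sub, exp_log hT] using mul_sub_log_le_exp_sub (hl i) (d i - log T)
  have hrhs : ∑ i, (exp (d i) / T - l i) = 0 := by
    rw [Finset.sum_sub_distrib, ← Finset.sum_div, div_self hT.ne', hsum, sub_self]
  have hlhs : ∑ i, l i * (d i - log T - log (l i))
      = ∑ i, l i * d i - log T - ∑ i, l i * log (l i) := by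
    simp only [mul_sub, Finset.sum_sub_distrib, ← Finset.sum_mul, hsum, one_mul]
  linarith [log_le_log hT ht]

theorem sum_mul_log_le_sum_mul_log_add (hl : ∀ i, 0 ≤ l i) {ε : ℝ} (hε : 0 < ε) :
    ∑ i, l i * log (l i) ≤ ∑ i, l i * log (l i + ε) :=
  Finset.sum_le_sum fun i _ => by
    rcases (hl i).eq_or_lt with h | h
    · simp [← h]
    · exact mul_le_mul_of_nonneg_left (log_le_log h (by linarith)) h.le

theorem isLUB_range_sum_mul_sub_log_sum_exp (hl : ∀ i, 0 ≤ l i) (hsum : ∑ i, l i = 1) :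
    IsLUB (Set.range fun d : ι → ℝ => ∑ i, l i * d i - log (∑ i, exp (d i)))
      (∑ i, l i * log (l i)) := by
  refine ⟨Set.forall_mem_range.2 fun d => sum_mul_sub_log_le_sum_mul_log hl hsum le_rfl,
    fun b hb => ?_⟩
  have hle_add : ∀ ε > 0, ∑ i, l i * log (l i) ≤ b + Fintype.card ι * ε := by
    intro ε hε
    have hpos : ∀ i, 0 < l i + ε := fun i => by linarith [hl i]
    have hsum_exp : ∑ i, exp (log (l i + ε)) = 1 + Fintype.card ι * ε := by
      simp [exp_log (hpos _), Finset.sum_add_distrib, hsum]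
    have hval := hb ⟨fun i => log (l i + ε), rfl⟩
    simp only [hsum_exp] at hval
    linarith [log_le_sub_one_of_pos (by positivity : (0 : ℝ) < 1 + Fintype.card ι * ε),
      sum_mul_log_le_sum_mul_log_add hl hε]
  refine le_of_forall_pos_le_add fun δ hδ =>
    (hle_add (δ / (Fintype.card ι + 1)) (by positivity)).trans ?_
  have : (Fintype.card ι : ℝ) * (δ / (Fintype.card ι + 1)) ≤ δ := by
    rw [← mul_div_assoc, div_le_iff₀ (by positivity)]
    nlinarith
  linarith

end Gibbs

namespace Matrix

variable {ι : Type*} [Fintype ι] [DecidableEq ι]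

theorem exp_unitary_conj (U : unitary (Matrix ι ι ℂ)) (A : Matrix ι ι ℂ) :
    NormedSpace.exp ((U : Matrix ι ι ℂ) * A * star (U : Matrix ι ι ℂ))
      = U * NormedSpace.exp A * star (U : Matrix ι ι ℂ) :=
  exp_units_conj (Unitary.toUnits U) A

theorem exp_diagonal_ofReal (d : ι → ℝ) :
    NormedSpace.exp (diagonal fun i => (d i : ℂ)) = diagonal fun i => (Real.exp (d i) : ℂ) := by
  rw [exp_diagonal]
  congr 1
  ext i
  rw [Pi.coe_exp, ← Complex.exp_eq_exp_ℂ, Complex.ofReal_exp]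

theorem trace_unitary_conj (U : unitary (Matrix ι ι ℂ)) (A : Matrix ι ι ℂ) :
    trace ((U : Matrix ι ι ℂ) * A * star (U : Matrix ι ι ℂ)) = trace A := by
  rw [trace_mul_cycle, Unitary.star_mul_self_of_mem U.2, one_mul]

theorem mul_diagonal_mul_star_apply_self (U : Matrix ι ι ℂ) (c : ι → ℝ) (i : ι) :
    (U * diagonal (fun k => (c k : ℂ)) * star U) i i
      = ((∑ k, Complex.normSq (U i k) * c k : ℝ) : ℂ) := by
  rw [mul_apply]
  simp [mul_diagonal, Complex.normSq_eq_conj_mul_self, mul_assoc, mul_comm, mul_left_comm]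

theorem sum_normSq_unitary_apply (U : unitary (Matrix ι ι ℂ)) (i : ι) :
    ∑ k, Complex.normSq ((U : Matrix ι ι ℂ) i k) = 1 := by
  have h := mul_diagonal_mul_star_apply_self (U : Matrix ι ι ℂ) 1 i
  simp only [Pi.one_apply, Complex.ofReal_one, diagonal_one, mul_one,
    Unitary.mul_star_self_of_mem U.2, one_apply_eq] at h
  exact_mod_cast h.symm

theorem IsHermitian.exp_diag_le_diag_exp {q : Matrix ι ι ℂ} (hq : q.IsHermitian) (i : ι) :
    Real.exp (q i i).re ≤ (NormedSpace.exp q i i).re := by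
  have hspec : q = hq.eigenvectorUnitary * diagonal (fun k => (hq.eigenvalues k : ℂ)) *
      star (hq.eigenvectorUnitary : Matrix ι ι ℂ) := hq.spectral_theorem
  set U := hq.eigenvectorUnitary
  set lam := hq.eigenvalues
  clear_value U lam
  subst hspec
  rw [exp_unitary_conj, exp_diagonal_ofReal, mul_diagonal_mul_star_apply_self,
    mul_diagonal_mul_star_apply_self, Complex.ofReal_re, Complex.ofReal_re]
  simpa using convexOn_exp.map_sum_le (fun k _ => Complex.normSq_nonneg _)
    (sum_normSq_unitary_apply U i) (fun k _ => Set.mem_univ (lam k))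

theorem IsHermitian.sum_exp_diag_le_trace_exp {q : Matrix ι ι ℂ} (hq : q.IsHermitian) :
    ∑ i, Real.exp (q i i).re ≤ (trace (NormedSpace.exp q)).re := by
  rw [trace, Complex.re_sum]
  exact Finset.sum_le_sum fun i _ => hq.exp_diag_le_diag_exp i

theorem IsHermitian.re_trace_unitary_conj_mul {p : Matrix ι ι ℂ} (hp : p.IsHermitian)
    (q : Matrix ι ι ℂ) :
    (trace ((hp.eigenvectorUnitary : Matrix ι ι ℂ) * q *
      star (hp.eigenvectorUnitary : Matrix ι ι ℂ) * p)).re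
      = ∑ i, hp.eigenvalues i * (q i i).re := by
  set U : Matrix ι ι ℂ := ↑hp.eigenvectorUnitary
  have hdiag : star U * p * U = diagonal fun i => (hp.eigenvalues i : ℂ) := by
    simpa [Function.comp_def] using hp.conjStarAlgAut_star_eigenvectorUnitary
  have hcycle : trace (U * q * star U * p) = trace (star U * p * U * q) := by
    rw [mul_assoc (U * q), trace_mul_comm (U * q), mul_assoc (star U * p)]
  rw [hcycle, hdiag, trace, Complex.re_sum]
  simp [diagonal_mul]

end Matrix

theorem trEnt_eq_sum_mul_log {n : ℕ} {p : Matrix (Fin n) (Fin n) ℂ} (hp : p.IsHermitian) :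
    trEnt p = ∑ i, hp.eigenvalues i * Real.log (hp.eigenvalues i) := by
  rw [trEnt, hcfc, dif_pos hp, trace_unitary_conj, trace_diagonal, ← Complex.ofReal_sum,
    Complex.ofReal_re]

/-- Petz's variational formula: for a density matrix `p`, the supremum over Hermitian `x` of
`tr(x·p) − log tr(exp x)` equals `tr(p log p)`.  Here `exp` is the matrix exponential, and
`tr(x·p)` and `tr(exp x)` are real (their real parts are taken). -/
theorem relativeEntropy_variational {n : ℕ} (p : Matrix (Fin n) (Fin n) ℂ)
    (hp : p.PosSemidef) (htr : Matrix.trace p = 1) :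
    IsLUB {r : ℝ | ∃ x : Matrix (Fin n) (Fin n) ℂ, x.IsHermitian ∧
        r = (Matrix.trace (x * p)).re - Real.log (Matrix.trace (NormedSpace.exp x)).re}
      (trEnt p) := by
  have hH := hp.1
  set U : Matrix (Fin n) (Fin n) ℂ := ↑hH.eigenvectorUnitary
  have hsum : ∑ i, hH.eigenvalues i = 1 :=
    RCLike.ofReal_injective (K := ℂ) (by simpa [htr] using hH.trace_eq_sum_eigenvalues.symm)
  have hgibbs := isLUB_range_sum_mul_sub_log_sum_exp hp.eigenvalues_nonneg hsum
  rw [trEnt_eq_sum_mul_log hH]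
  refine ⟨?upper, fun b hb => hgibbs.2 (upperBounds_mono_set ?diag hb)⟩
  case upper =>
    rintro _ ⟨x, hx, rfl⟩
    have hxq : x = U * (star U * x * U) * star U := by
      have hU : U * star U = 1 := Unitary.mul_star_self_of_mem hH.eigenvectorUnitary.2
      simp only [← mul_assoc, hU, one_mul]
      rw [mul_assoc, hU, mul_one]
    have hq : (star U * x * U).IsHermitian := isHermitian_conjTranspose_mul_mul U hx
    rw [hxq, hH.re_trace_unitary_conj_mul, exp_unitary_conj, trace_unitary_conj]
    exact sum_mul_sub_log_le_sum_mul_log hp.eigenvalues_nonneg hsum hq.sum_exp_diag_le_trace_exp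
  case diag =>
    rintro _ ⟨d, rfl⟩
    refine ⟨U * diagonal (fun i => (d i : ℂ)) * star U,
      isHermitian_mul_mul_conjTranspose U
        (isHermitian_diagonal_iff.2 fun i => Complex.conj_ofReal (d i)), ?_⟩
    rw [hH.re_trace_unitary_conj_mul, exp_unitary_conj, trace_unitary_conj, exp_diagonal_ofReal,
      trace_diagonal, ← Complex.ofReal_sum, Complex.ofReal_re]
    simp only [diagonal_apply_eq, Complex.ofReal_re]
end

section
/- Let ∂ : M_n(ℂ) → 𝓗 be a symmetric gradient and Δ := ∂*∂ (a positive semidefinite self-adjoint operator on M_n(ℂ) with Δ(1) = 0, since ∂(1) = 0). Assume e^{−tΔ} is positivity preserving for every t ≥ 0. Then e^{−tΔ} is positivity improving — for every nonzero positive semidefinite x ∈ M_n(ℂ) and every t > 0 the matrix e^{−tΔ}(x) is positive definite — if and only if ker Δ = ℂ·1, i.e. the identity matrix spans the kernel of Δ. -/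
open Matrix
open scoped ComplexOrder

attribute [local instance] Matrix.frobeniusNormedAddCommGroup Matrix.frobeniusNormedSpace

/-- The exponential of a linear endomorphism of the matrix algebra. -/
noncomputable def expEnd {n : ℕ}
    (T : Matrix (Fin n) (Fin n) ℂ →ₗ[ℂ] Matrix (Fin n) (Fin n) ℂ) :
    Matrix (Fin n) (Fin n) ℂ →ₗ[ℂ] Matrix (Fin n) (Fin n) ℂ :=
  haveI : IsTopologicalRing (Matrix (Fin n) (Fin n) ℂ →L[ℂ] Matrix (Fin n) (Fin n) ℂ) :=
    @NonUnitalSeminormedRing.toIsTopologicalRing _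
      ContinuousLinearMap.toNormedRing.toNonUnitalNormedRing.toNonUnitalSeminormedRing
  (NormedSpace.exp (LinearMap.toContinuousLinearMap T)).toLinearMap

/-!
Since `⟨a, Δ a⟩ = ∑ₖ ‖∂ₖ a‖²`, the kernel of `Δ` is the kernel of `∂`, which is closed under `⋆`.

(⇒) `e^{-tΔ}` fixes `ker Δ`, so every nonzero positive element of `ker Δ` is positive definite.
Shifting a hermitian element of `ker Δ` by its least eigenvalue yields a singular positive element
of `ker Δ`, which must vanish; hence hermitian elements of `ker Δ` are scalars.

(⇐) Write `y = e^{-tΔ} x = c²` with `c` hermitian and let `c η = 0`. The function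
`s ↦ ⟨η, e^{-sΔ} x η⟩` is nonnegative and vanishes at `s = t`, so `⟨η, Δ y η⟩` has zero real part.
A Kato-type identity gives `⟨η, Δ(c²) η⟩ = -2 ∑ₖ ‖∂ₖ c η‖²`, so every `∂ₖ c` kills `ker c`.
The Leibniz rule then puts the support projection of `c` into `ker ∂ = ℂ 1`, so `c` is injective.
-/

section ContinuousLinearMap

variable {E : Type*} [NormedAddCommGroup E] [NormedSpace ℂ E] [CompleteSpace E]

theorem ContinuousLinearMap.exp_apply_of_apply_eq_zero {A : E →L[ℂ] E} {z : E} (hz : A z = 0) :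
    NormedSpace.exp A z = z := by
  have hsum := (NormedSpace.exp_series_hasSum_exp' (𝕂 := ℂ) A).mapL (apply ℂ E z)
  refine (hsum.unique (hasSum_single 0 fun k hk => ?_)).trans (by simp)
  obtain ⟨j, rfl⟩ := Nat.exists_eq_succ_of_ne_zero hk
  simp [pow_succ, hz]

theorem ContinuousLinearMap.exp_injective (A : E →L[ℂ] E) :
    Function.Injective (NormedSpace.exp A : E →L[ℂ] E) :=
  (ContinuousLinearMap.isUnit_iff_bijective.mp <| NormedSpace.isUnit_exp_of_mem_ball (𝕂 := ℂ)
    (by simp [NormedSpace.expSeries_radius_eq_top])).injective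

theorem ContinuousLinearMap.hasDerivAt_exp_smul_apply (A : E →L[ℂ] E) (x : E) (t : ℝ) :
    HasDerivAt (fun s : ℝ => NormedSpace.exp (s • A) x) (A (NormedSpace.exp (t • A) x)) t :=
  ((ContinuousLinearMap.apply ℂ E x).restrictScalars ℝ).hasFDerivAt.comp_hasDerivAt t
    (hasDerivAt_exp_smul_const' A t)

end ContinuousLinearMap

section expEnd
variable {n : ℕ} (T : Matrix (Fin n) (Fin n) ℂ →ₗ[ℂ] Matrix (Fin n) (Fin n) ℂ)

theorem expEnd_apply_of_map_eq_zero {z : Matrix (Fin n) (Fin n) ℂ} (hz : T z = 0) :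
    expEnd T z = z :=
  ContinuousLinearMap.exp_apply_of_apply_eq_zero (A := LinearMap.toContinuousLinearMap T) hz

theorem expEnd_injective : Function.Injective (expEnd T) :=
  ContinuousLinearMap.exp_injective (LinearMap.toContinuousLinearMap T)

theorem hasDerivAt_expEnd_neg_smul_apply (x : Matrix (Fin n) (Fin n) ℂ) (t : ℝ) :
    HasDerivAt (fun s : ℝ => expEnd ((-s) • T) x) (-T (expEnd ((-t) • T) x)) t := by
  have h : ∀ s : ℝ, LinearMap.toContinuousLinearMap ((-s) • T) =
      s • -LinearMap.toContinuousLinearMap T := fun s => by ext; simp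
  have := ContinuousLinearMap.hasDerivAt_exp_smul_apply (-LinearMap.toContinuousLinearMap T) x t
  simp only [expEnd, h]
  exact this

end expEnd

theorem Submodule.le_of_forall_isSelfAdjoint_mem {A : Type*} [AddCommGroup A] [Module ℂ A]
    [StarAddMonoid A] [StarModule ℂ A] {S T : Submodule ℂ A} (hS : ∀ z ∈ S, star z ∈ S)
    (hT : ∀ z ∈ S, IsSelfAdjoint z → z ∈ T) : S ≤ T := by
  intro z hz
  have hre : (realPart z : A) ∈ S := by
    rw [realPart_apply_coe]
    exact S.smul_of_tower_mem _ (S.add_mem hz (hS z hz))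
  have him : (imaginaryPart z : A) ∈ S := by
    rw [imaginaryPart_apply_coe]
    exact S.smul_mem _ (S.smul_of_tower_mem _ (S.sub_mem hz (hS z hz)))
  rw [← realPart_add_I_smul_imaginaryPart z]
  exact T.add_mem (hT _ hre (realPart z).2) (T.smul_mem _ (hT _ him (imaginaryPart z).2))

namespace Matrix

variable {ι : Type*} [Fintype ι]

theorem mul_eq_zero_of_ker_le_ker {A B M : Matrix ι ι ℂ}
    (hAB : ∀ v, A *ᵥ v = 0 → B *ᵥ v = 0) (hAM : A * M = 0) : B * M = 0 :=
  ext_iff_mulVec.mpr fun v => by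
    rw [← mulVec_mulVec, hAB _ (by rw [mulVec_mulVec, hAM, zero_mulVec]), zero_mulVec]

theorem re_star_dotProduct_mulVec_eq_zero_of_hasDerivAt {f : ℝ → Matrix ι ι ℂ}
    {f' : Matrix ι ι ℂ} {t : ℝ} (hf : HasDerivAt f f' t) (hpos : ∀ᶠ s in nhds t, (f s).PosSemidef)
    {η : ι → ℂ} (hη : f t *ᵥ η = 0) : (star η ⬝ᵥ (f' *ᵥ η)).re = 0 := by
  let ψ : Matrix ι ι ℂ →ₗ[ℂ] ℂ :=
    { toFun := fun M => star η ⬝ᵥ (M *ᵥ η)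
      map_add' := fun a b => by rw [add_mulVec, dotProduct_add]
      map_smul' := fun a b => by rw [smul_mulVec, dotProduct_smul]; rfl }
  let χ : Matrix ι ι ℂ →L[ℝ] ℝ :=
    Complex.reCLM.comp ((LinearMap.toContinuousLinearMap ψ).restrictScalars ℝ)
  have hmin : IsLocalMin (fun s => χ (f s)) t := by
    filter_upwards [hpos] with s hs
    simpa [χ, ψ, hη] using (Complex.nonneg_iff.mp (hs.dotProduct_mulVec_nonneg η)).1
  exact hmin.hasDerivAt_eq_zero (χ.hasFDerivAt.comp_hasDerivAt t hf)

variable [DecidableEq ι]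

open scoped MatrixOrder in
theorem IsHermitian.exists_support_projection {c : Matrix ι ι ℂ} (hc : c.IsHermitian) :
    ∃ p : Matrix ι ι ℂ, star p = p ∧ p * p = p ∧ c * p = c ∧ ∀ v, c *ᵥ v = 0 → p *ᵥ v = 0 := by
  have hcont : ∀ f : ℝ → ℝ, ContinuousOn f (spectrum ℝ c) := fun f =>
    c.finite_real_spectrum.continuousOn f
  -- `x⁻¹ * x` is the indicator of `x ≠ 0`, since `0⁻¹ = 0`.
  refine ⟨cfc (fun x : ℝ => x⁻¹ * x) c, (cfc_predicate (R := ℝ) _ c).star_eq, ?_, ?_,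
    fun v hv => ?_⟩
  · rw [← cfc_mul _ _ c (hcont _) (hcont _)]
    refine cfc_congr fun x _ => ?_
    rcases eq_or_ne x 0 with rfl | hx <;> simp [*]
  · nth_rw 1 [← cfc_id' ℝ c]
    rw [← cfc_mul _ _ c (hcont _) (hcont _)]
    exact (cfc_congr fun x _ => by rw [← mul_assoc, mul_inv_mul_cancel]).trans (cfc_id' ℝ c)
  · rw [cfc_mul _ _ c (hcont _) (hcont _), cfc_id' ℝ c, ← mulVec_mulVec, hv, mulVec_zero]

open scoped MatrixOrder in
theorem IsHermitian.mem_span_one_of_forall_posDef {S : Submodule ℂ (Matrix ι ι ℂ)} (hS1 : 1 ∈ S)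
    (hS : ∀ x ∈ S, x.PosSemidef → x ≠ 0 → x.PosDef) {w : Matrix ι ι ℂ} (hw : w.IsHermitian)
    (hwS : w ∈ S) : w ∈ Submodule.span ℂ {1} := by
  cases isEmpty_or_nonempty ι
  · simp [Subsingleton.elim w 0]
  obtain ⟨l, hl, hmin⟩ := Set.exists_min_image (spectrum ℝ w) id w.finite_real_spectrum
    (ContinuousFunctionalCalculus.spectrum_nonempty w hw.isSelfAdjoint)
  have hlS : algebraMap ℝ (Matrix ι ι ℂ) l = (l : ℂ) • 1 := by
    rw [Algebra.algebraMap_eq_smul_one, ← Complex.coe_smul]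
  have hpsd : (w - algebraMap ℝ _ l).PosSemidef :=
    (algebraMap_le_iff_le_spectrum (R := ℝ) hw.isSelfAdjoint).mpr hmin
  have hzero : w - algebraMap ℝ _ l = 0 := by
    by_contra hne
    refine (spectrum.mem_iff.mp hl) ?_
    rw [← neg_sub, IsUnit.neg_iff]
    exact (hS _ (S.sub_mem hwS (hlS ▸ S.smul_mem _ hS1)) hpsd hne).isUnit
  rw [sub_eq_zero.mp hzero, hlS]
  exact Submodule.smul_mem _ _ (Submodule.mem_span_singleton_self 1)

open scoped MatrixOrder in
theorem PosSemidef.exists_isHermitian_mul_self_eq {y : Matrix ι ι ℂ} (hy : y.PosSemidef) :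
    ∃ c : Matrix ι ι ℂ, c.IsHermitian ∧ c * c = y :=
  ⟨CFC.sqrt y, (CFC.sqrt_nonneg y).posSemidef.isHermitian, CFC.sqrt_mul_sqrt_self y hy.nonneg⟩

end Matrix

section SymmetricDerivation

variable {ι κ : Type*} [Fintype ι] {D : Matrix ι ι ℂ →ₗ[ℂ] (κ → Matrix ι ι ℂ)}

theorem derivation_map_one [DecidableEq ι]
    (hLeib : ∀ k a b, D (a * b) k = D a k * b + a * D b k) : D 1 = 0 := by
  funext k
  simpa using hLeib k 1 1

theorem eq_zero_or_mulVec_injective_of_derivation_mulVec_eq_zero [DecidableEq ι]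
    (hLeib : ∀ k a b, D (a * b) k = D a k * b + a * D b k)
    (hSym : ∀ k a, D (star a) k = star (D a k))
    (hker : LinearMap.ker D ≤ Submodule.span ℂ {1}) {c : Matrix ι ι ℂ} (hc : c.IsHermitian)
    (hDc : ∀ η, c *ᵥ η = 0 → ∀ k, D c k *ᵥ η = 0) : c = 0 ∨ Function.Injective c.mulVec := by
  obtain ⟨p, hp_star, hp_idem, hcp, hp_ker⟩ := hc.exists_support_projection
  have hc_compl : c * (1 - p) = 0 := by rw [Matrix.mul_sub, hcp, Matrix.mul_one, sub_self]
  have hcDp : ∀ k, c * D p k = 0 := fun k => by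
    have hDcp : D c k * p = D c k := by
      have h := mul_eq_zero_of_ker_le_ker (fun η hη => hDc η hη k) hc_compl
      rwa [Matrix.mul_sub, Matrix.mul_one, sub_eq_zero, eq_comm] at h
    simpa [hcp, hDcp] using hLeib k c p
  have hpDp : ∀ k, p * D p k = 0 := fun k =>
    mul_eq_zero_of_ker_le_ker hp_ker (hcDp k)
  have hDpp : ∀ k, D p k * p = 0 := fun k => by
    simpa [hp_star, ← hSym] using congrArg star (hpDp k)
  have hDp : D p = 0 := funext fun k => by simpa [hp_idem, hDpp, hpDp] using hLeib k p p
  obtain ⟨α, hα⟩ := Submodule.mem_span_singleton.mp (hker (LinearMap.mem_ker.mpr hDp))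
  refine or_iff_not_imp_left.mpr fun hc0 => ?_
  have hαc : c * (α • 1) = α • c := by rw [Matrix.mul_smul, Matrix.mul_one]
  rw [hα, hcp] at hαc
  have hp1 : p = 1 := by
    have h : (α - 1) • c = 0 := by rw [sub_smul, one_smul, ← hαc, sub_self]
    rw [← hα, sub_eq_zero.mp ((smul_eq_zero.mp h).resolve_right hc0), one_smul]
  intro v w hvw
  simpa [hp1, sub_eq_zero] using hp_ker (v - w) (by rw [mulVec_sub, hvw, sub_self])

variable [Fintype κ] {Dadj : (κ → Matrix ι ι ℂ) →ₗ[ℂ] Matrix ι ι ℂ}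

theorem ker_adj_comp_eq_ker
    (hAdj : ∀ a h, ∑ k, (star (D a k) * h k).trace = (star a * Dadj h).trace) :
    LinearMap.ker (Dadj ∘ₗ D) = LinearMap.ker D := by
  refine le_antisymm (fun a ha => ?_) (LinearMap.ker_le_ker_comp D Dadj)
  have hΔa : Dadj (D a) = 0 := ha
  have hsum : ∑ k, ((D a k)ᴴ * D a k).trace = 0 := by
    simpa [star_eq_conjTranspose, hΔa] using hAdj a (D a)
  rw [Finset.sum_eq_zero_iff_of_nonneg fun k _ =>
    (posSemidef_conjTranspose_mul_self _).trace_nonneg] at hsum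
  exact funext fun k => trace_conjTranspose_mul_self_eq_zero_iff.mp (hsum k (Finset.mem_univ k))

theorem trace_mul_adj_derivation_mul_self
    (hLeib : ∀ k a b, D (a * b) k = D a k * b + a * D b k)
    (hSym : ∀ k a, D (star a) k = star (D a k))
    (hAdj : ∀ a h, ∑ k, (star (D a k) * h k).trace = (star a * Dadj h).trace)
    {c e : Matrix ι ι ℂ} (hc : star c = c) (he : star e = e) (hce : c * e = 0) :
    (e * Dadj (D (c * c))).trace = -2 * ∑ k, (e * (D c k * D c k)).trace := by
  have hec : e * c = 0 := by simpa [he, hc] using congrArg star hce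
  have hAdj_e := hAdj e (D (c * c))
  rw [he] at hAdj_e
  rw [← hAdj_e, Finset.mul_sum]
  refine Finset.sum_congr rfl fun k _ => ?_
  have hE : star (D e k) = D e k := by rw [← hSym, he]
  have hcE : c * D e k = -(D c k * e) := by
    have h := hLeib k c e
    rw [hce, map_zero] at h
    exact eq_neg_of_add_eq_zero_right h.symm
  have hEc : D e k * c = -(e * D c k) := by
    have h := hLeib k e c
    rw [hec, map_zero] at h
    exact eq_neg_of_add_eq_zero_left h.symm
  have h1 : (D e k * (D c k * c)).trace = -(e * (D c k * D c k)).trace := by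
    rw [← Matrix.mul_assoc, trace_mul_comm, ← Matrix.mul_assoc, hcE, Matrix.neg_mul, trace_neg,
      Matrix.mul_assoc, trace_mul_comm, Matrix.mul_assoc]
  have h2 : (D e k * (c * D c k)).trace = -(e * (D c k * D c k)).trace := by
    rw [← Matrix.mul_assoc, hEc, Matrix.neg_mul, trace_neg, Matrix.mul_assoc]
  rw [hE, hLeib k c c, Matrix.mul_add, trace_add, h1, h2]
  ring

theorem derivation_mulVec_eq_zero_of_re_eq_zero
    (hLeib : ∀ k a b, D (a * b) k = D a k * b + a * D b k)
    (hSym : ∀ k a, D (star a) k = star (D a k))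
    (hAdj : ∀ a h, ∑ k, (star (D a k) * h k).trace = (star a * Dadj h).trace)
    {c : Matrix ι ι ℂ} (hc : star c = c) {η : ι → ℂ} (hη : c *ᵥ η = 0)
    (h : (star η ⬝ᵥ (Dadj (D (c * c)) *ᵥ η)).re = 0) (k : κ) : D c k *ᵥ η = 0 := by
  set e := vecMulVec η (star η)
  have trace_e_mul : ∀ M : Matrix ι ι ℂ, (e * M).trace = star η ⬝ᵥ (M *ᵥ η) := fun M => by
    rw [trace_mul_comm, mul_vecMulVec, trace_vecMulVec, dotProduct_comm]
  have he : star e = e := by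
    simp [e, star_eq_conjTranspose, conjTranspose_vecMulVec]
  have hce : c * e = 0 := by simp [e, mul_vecMulVec, hη]
  have hsq : ∀ k, (e * (D c k * D c k)).trace = star (D c k *ᵥ η) ⬝ᵥ (D c k *ᵥ η) := fun k => by
    have hA : (D c k)ᴴ = D c k := by rw [← star_eq_conjTranspose, ← hSym, hc]
    rw [trace_e_mul, ← mulVec_mulVec, star_mulVec, hA, dotProduct_mulVec]
  have hkato := trace_mul_adj_derivation_mul_self hLeib hSym hAdj hc he hce
  simp only [hsq] at hkato
  rw [trace_e_mul] at hkato
  have hnonneg : ∀ k, 0 ≤ star (D c k *ᵥ η) ⬝ᵥ (D c k *ᵥ η) := fun k =>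
    dotProduct_star_self_nonneg _
  have hsum : ∑ k, star (D c k *ᵥ η) ⬝ᵥ (D c k *ᵥ η) = 0 := by
    have hre : (∑ k, star (D c k *ᵥ η) ⬝ᵥ (D c k *ᵥ η)).re = 0 := by
      rw [hkato] at h
      simpa using h
    exact Complex.ext hre (Complex.nonneg_iff.mp (Finset.sum_nonneg fun k _ => hnonneg k)).2.symm
  rw [Finset.sum_eq_zero_iff_of_nonneg fun k _ => hnonneg k] at hsum
  exact dotProduct_star_self_eq_zero.mp (hsum k (Finset.mem_univ k))

end SymmetricDerivation

/-- Let `∂` be a symmetric gradient on `M_n(ℂ)` with adjoint `∂*` (w.r.t. the Frobenius inner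
product `⟨a,b⟩ = tr(a†b)`) and `Δ = ∂*∂`.  If `e^{−tΔ}` is positivity preserving for all
`t ≥ 0`, then it is positivity improving if and only if the kernel of `Δ` is spanned by the
identity matrix. -/
theorem heat_positivity_improving_iff_ker_eq_span_one {n m : ℕ}
    (D : Matrix (Fin n) (Fin n) ℂ →ₗ[ℂ] (Fin m → Matrix (Fin n) (Fin n) ℂ))
    (hLeib : ∀ (k : Fin m) (a b : Matrix (Fin n) (Fin n) ℂ),
      D (a * b) k = D a k * b + a * D b k)
    (hSym : ∀ (k : Fin m) (a : Matrix (Fin n) (Fin n) ℂ), D (star a) k = star (D a k))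
    (Dadj : (Fin m → Matrix (Fin n) (Fin n) ℂ) →ₗ[ℂ] Matrix (Fin n) (Fin n) ℂ)
    (hAdj : ∀ (a : Matrix (Fin n) (Fin n) ℂ) (h : Fin m → Matrix (Fin n) (Fin n) ℂ),
      (∑ k, Matrix.trace (star (D a k) * h k)) = Matrix.trace (star a * Dadj h))
    (hpp : ∀ t : ℝ, 0 ≤ t → ∀ x : Matrix (Fin n) (Fin n) ℂ, x.PosSemidef →
      (expEnd ((-t) • (Dadj ∘ₗ D)) x).PosSemidef) :
    (∀ x : Matrix (Fin n) (Fin n) ℂ, x.PosSemidef → x ≠ 0 →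
        ∀ t : ℝ, 0 < t → (expEnd ((-t) • (Dadj ∘ₗ D)) x).PosDef) ↔
      LinearMap.ker (Dadj ∘ₗ D) = Submodule.span ℂ {(1 : Matrix (Fin n) (Fin n) ℂ)} := by
  have hD1 : D 1 = 0 := derivation_map_one hLeib
  rw [ker_adj_comp_eq_ker hAdj]
  constructor
  · intro himp
    refine le_antisymm
      (Submodule.le_of_forall_isSelfAdjoint_mem (fun z hz => ?_) fun w hwD hsa => ?_)
      ((Submodule.span_singleton_le_iff_mem _ _).mpr hD1)
    · exact funext fun k => by simp [hSym, LinearMap.mem_ker.mp hz]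
    refine hsa.isHermitian.mem_span_one_of_forall_posDef hD1 (fun x hx hpsd hne => ?_) hwD
    have hfix : expEnd ((-1 : ℝ) • (Dadj ∘ₗ D)) x = x :=
      expEnd_apply_of_map_eq_zero _ (by simp [LinearMap.mem_ker.mp hx])
    simpa [hfix] using himp x hpsd hne 1 one_pos
  · intro hker x hx hx0 t ht
    obtain ⟨c, hc, hcc⟩ := (hpp t ht.le x hx).exists_isHermitian_mul_self_eq
    have hDc : ∀ η, c *ᵥ η = 0 → ∀ k, D c k *ᵥ η = 0 := fun η hη => by
      have hre := re_star_dotProduct_mulVec_eq_zero_of_hasDerivAt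
        (hasDerivAt_expEnd_neg_smul_apply _ x t)
        (by filter_upwards [lt_mem_nhds ht] with s hs using hpp s hs.le x hx)
        (by rw [← hcc, ← mulVec_mulVec, hη, mulVec_zero])
      refine derivation_mulVec_eq_zero_of_re_eq_zero hLeib hSym hAdj hc hη ?_
      simpa [← hcc, neg_mulVec] using hre
    rcases eq_zero_or_mulVec_injective_of_derivation_mulVec_eq_zero hLeib hSym hker.le hc hDc
      with hc0 | hinj
    · exact absurd (expEnd_injective _ (by rw [← hcc, hc0, Matrix.mul_zero, map_zero])) hx0
    · simpa [← hcc, hc.eq] using PosDef.conjTranspose_mul_self c hinj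
end

section
/- Let (X, Σ, μ) be a measure space and F : X → M_n(ℂ) a strongly measurable function such that F(x) is positive semidefinite and tr(F(x)²) = 1 for μ-almost every x ∈ X. Then there exists a sequence of simple (finitely-valued measurable) functions S_i : X → M_n(ℂ) such that for every i and μ-almost every x, S_i(x) is positive semidefinite with tr(S_i(x)) = 1, and S_i(x) → F(x)² as i → ∞ for μ-almost every x ∈ X. -/
open Matrix MeasureTheory
open scoped ComplexOrder

/-!
Apply to the approximating simple functions `G i` the map `A ↦ AᴴA / tr(AᴴA)`. Its values are
density matrices, and it is continuous wherever `tr(AᴴA) ≠ 0`; at `F x`, which is Hermitian with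
`tr((F x)²) = 1`, it takes the value `(F x)²`, so the images of `G i x` converge to `(F x)²`.
-/

namespace Matrix

variable {n 𝕜 : Type*} [Fintype n] [DecidableEq n] [RCLike 𝕜]

/-- Where `AᴴA = 0` the unit-trace normalization is undefined; we fall back on the maximally
mixed state `1 / card n`. -/
noncomputable def normalizedGram (A : Matrix n n 𝕜) : Matrix n n 𝕜 :=
  if trace (Aᴴ * A) = 0 then (Fintype.card n : 𝕜)⁻¹ • 1
  else (trace (Aᴴ * A))⁻¹ • (Aᴴ * A)

lemma posSemidef_normalizedGram (A : Matrix n n 𝕜) : (normalizedGram A).PosSemidef := by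
  unfold normalizedGram
  split_ifs with h
  · exact PosSemidef.one.smul (by positivity)
  · have hAA := posSemidef_conjTranspose_mul_self A
    exact hAA.smul (RCLike.inv_pos_of_pos (hAA.trace_nonneg.lt_of_ne' h)).le

lemma trace_normalizedGram [Nonempty n] (A : Matrix n n 𝕜) : trace (normalizedGram A) = 1 := by
  unfold normalizedGram
  split_ifs with h
  · simp [trace_smul, trace_one]
  · rw [trace_smul, smul_eq_mul, inv_mul_cancel₀ h]

lemma continuousAt_normalizedGram {A : Matrix n n 𝕜} (h : trace (Aᴴ * A) ≠ 0) :
    ContinuousAt normalizedGram A := by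
  have hgram : Continuous fun B : Matrix n n 𝕜 => Bᴴ * B :=
    continuous_id.matrix_conjTranspose.matrix_mul continuous_id
  have htrace : Continuous fun B : Matrix n n 𝕜 => trace (Bᴴ * B) := hgram.matrix_trace
  have heq : (fun B => (trace (Bᴴ * B))⁻¹ • (Bᴴ * B)) =ᶠ[nhds A] normalizedGram :=
    (htrace.continuousAt.eventually_ne h).mono fun B hB => by simp [normalizedGram, hB]
  exact ((htrace.continuousAt.inv₀ h).smul hgram.continuousAt).congr heq

lemma normalizedGram_of_isHermitian {A : Matrix n n 𝕜} (hA : A.IsHermitian)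
    (h : trace (A * A) = 1) : normalizedGram A = A * A := by
  simp [normalizedGram, hA.eq, h]

end Matrix

/-- Approximation of a strongly measurable field of positive square roots of density matrices:
if `F : X → M_n(ℂ)` is an a.e. pointwise limit of simple functions with `F(x)` positive
semidefinite and `tr(F(x)²) = 1` a.e., then there are simple functions `S_i`, a.e. valued in
density matrices (positive semidefinite with unit trace), with `S_i(x) → F(x)²` for a.e. `x`. -/
theorem simple_density_approximation {n : ℕ} {X : Type*} [MeasurableSpace X]
    (μ : Measure X) (F : X → Matrix (Fin n) (Fin n) ℂ)
    (hmeas : ∃ G : ℕ → SimpleFunc X (Matrix (Fin n) (Fin n) ℂ),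
      ∀ᵐ x ∂μ, Filter.Tendsto (fun i => G i x) Filter.atTop (nhds (F x)))
    (hpos : ∀ᵐ x ∂μ, (F x).PosSemidef)
    (htr : ∀ᵐ x ∂μ, Matrix.trace (F x * F x) = 1) :
    ∃ S : ℕ → SimpleFunc X (Matrix (Fin n) (Fin n) ℂ),
      (∀ i, ∀ᵐ x ∂μ, (S i x).PosSemidef ∧ Matrix.trace (S i x) = 1) ∧
      (∀ᵐ x ∂μ, Filter.Tendsto (fun i => S i x) Filter.atTop (nhds (F x * F x))) := by
  obtain ⟨G, hG⟩ := hmeas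
  refine ⟨fun i => (G i).map normalizedGram, fun i => ?_, ?_⟩
  · filter_upwards [htr] with x hx
    have : Nonempty (Fin n) := by
      by_contra hempty
      rw [not_nonempty_iff] at hempty
      simp [trace_eq_zero_of_isEmpty] at hx
    exact ⟨posSemidef_normalizedGram _, trace_normalizedGram _⟩
  · filter_upwards [hG, hpos, htr] with x hx hF htrF
    rw [← normalizedGram_of_isHermitian hF.1 htrF]
    exact (continuousAt_normalizedGram (by rw [hF.1.eq, htrF]; exact one_ne_zero)).tendsto.comp hx
end
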